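/- Let A be an alternating Büchi automaton, ≼_F a reflexive and transitive forward simulation on A such that A is ≼_F-unambiguous, ≼_B a reflexive and transitive backward simulation on A parametrised by ≼_F, and ≼_M a mediated preorder induced by ≼_F and ≼_B. Then for every partial run T of A on a word w ∈ Σ^ω with an extension function ext, there exists a partial run U of A on w such that T ≼_ext U, i.e., root(T) ≼_B root(U) and for every branch ψ of U there is a branch π of T with π ≼_α ψ and ext(π) ≼_F leaf(ψ). -/

import Mathlib

/-- An alternating Büchi automaton over alphabet `σ` with states `Q`:
initial state `ι`, transition function `δ` (where `P ∈ δ q a` means `q →a P`),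
and accepting states `α`. -/
structure ABA (σ Q : Type*) where
  ι : Q
  δ : Q → σ → Set (Set Q)
  α : Set Q

variable {σ Q : Type*}

/-- The assumption `∅ ∉ δ(q, a)` for all `q, a`. -/
def ABA.NoEmpty (A : ABA σ Q) : Prop := ∀ q a, ∅ ∉ A.δ q a

/-- The set of successors of a path `π` in a tree `T ⊆ Q⁺`. -/
def succs (T : Set (List Q)) (π : List Q) : Set Q := {q | π ++ [q] ∈ T}

/-- A tree over `Q`: a set of nonempty finite words over `Q`, closed under nonempty
prefixes and containing exactly one word of length one (its root). -/
structure IsTree (T : Set (List Q)) : Prop where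
  not_nil : [] ∉ T
  prefix_closed : ∀ π ∈ T, ∀ ρ : List Q, ρ <+: π → ρ ≠ [] → ρ ∈ T
  root : ∃! q : Q, [q] ∈ T

/-- The last state of a path (`A.ι` as a dummy for the empty path). -/
def lastSt (A : ABA σ Q) (π : List Q) : Q := π.getLastD A.ι

/-- A partial run of `A` on `w`: a finite tree in which every path either has no
successors or takes a transition of `A` on the appropriate letter of `w`. -/
structure IsPartialRun (A : ABA σ Q) (w : ℕ → σ) (T : Set (List Q)) : Prop where
  tree : IsTree T
  finite : T.Finite
  step : ∀ π ∈ T, succs T π = ∅ ∨ succs T π ∈ A.δ (lastSt A π) (w (π.length - 1))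

/-- A run of `A` on `w`. -/
structure IsRun (A : ABA σ Q) (w : ℕ → σ) (T : Set (List Q)) : Prop where
  tree : IsTree T
  step : ∀ π ∈ T, succs T π ∈ A.δ (lastSt A π) (w (π.length - 1))

/-- A (finite, maximal) branch of a tree. -/
def IsBranch (T : Set (List Q)) (π : List Q) : Prop := π ∈ T ∧ succs T π = ∅

/-- An infinite branch of a tree: all its nonempty finite prefixes belong to the tree. -/
def InfBranch (T : Set (List Q)) (ξ : ℕ → Q) : Prop :=
  ∀ n : ℕ, (List.ofFn fun i : Fin (n + 1) => ξ i) ∈ T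

/-- A run is accepting iff every infinite branch contains infinitely many accepting
states. -/
def Accepting (A : ABA σ Q) (T : Set (List Q)) : Prop :=
  ∀ ξ : ℕ → Q, InfBranch T ξ → ∀ n : ℕ, ∃ m ≥ n, ξ m ∈ A.α

/-- The language of `A`: the infinite words having an accepting run rooted at `ι`. -/
def ABA.Lang (A : ABA σ Q) : Set (ℕ → σ) :=
  {w | ∃ T : Set (List Q), IsRun A w T ∧ [A.ι] ∈ T ∧ Accepting A T}

/-- `p ≼_α r` : `p ∈ α ⇒ r ∈ α`. -/
def αle (A : ABA σ Q) (p r : Q) : Prop := p ∈ A.α → r ∈ A.α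

/-- A forward simulation on `A`. -/
def ForwardSim (A : ABA σ Q) (F : Q → Q → Prop) : Prop :=
  ∀ p r, F p r → (p ∈ A.α → r ∈ A.α) ∧
    ∀ a P, P ∈ A.δ p a → ∃ R ∈ A.δ r a, ∀ r' ∈ R, ∃ p' ∈ P, F p' r'

/-- A backward simulation on `A` parametrised by the forward simulation `F`. -/
def BackwardSim (A : ABA σ Q) (F B : Q → Q → Prop) : Prop :=
  ∀ p r, B p r → (p = A.ι → r = A.ι) ∧ (p ∈ A.α → r ∈ A.α) ∧
    ∀ a q P, p ∉ P → insert p P ∈ A.δ q a →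
      ∃ s R, r ∉ R ∧ insert r R ∈ A.δ s a ∧ B q s ∧ ∀ y ∈ R, ∃ x ∈ P, F x y

/-- `A` is `≼_F`-unambiguous: no transition has two distinct forward-equivalent states
on its right-hand side. -/
def Unambiguous (A : ABA σ Q) (F : Q → Q → Prop) : Prop :=
  ∀ p a P, P ∈ A.δ p a → ∀ q ∈ P, ∀ r ∈ P, q ≠ r → ¬ (F q r ∧ F r q)

/-- `M` is a mediated preorder induced by the forward simulation `F` and the backward
simulation `B`: a preorder containing `F`, contained in `F ∘ B⁻¹` (existence of a
mediator), and forward extensible. -/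
structure IsMediated (F B M : Q → Q → Prop) : Prop where
  refl : Reflexive M
  trans : Transitive M
  le_f : ∀ q r, F q r → M q r
  mediator : ∀ q r, M q r → ∃ s, F q s ∧ B r s
  fwd_ext : ∀ q r s, M q r → F r s → M q s

/-- An extension function for the partial run `T`: it assigns to every branch `π` of `T`
a state `ext π ≼_M leaf(π)`. -/
def IsExtFun (A : ABA σ Q) (M : Q → Q → Prop) (T : Set (List Q))
    (ext : List Q → Q) : Prop :=
  ∀ π, IsBranch T π → M (ext π) (lastSt A π)

/-- `π ≼_ext ψ` : `ψ` strongly covers `π` w.r.t. `ext`. -/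
def BrExt (A : ABA σ Q) (F : Q → Q → Prop) (ext : List Q → Q) (π ψ : List Q) : Prop :=
  List.Forall₂ (αle A) π ψ ∧ F (ext π) (lastSt A ψ)

/-- `π ≼_w-ext ψ` : `ψ` weakly covers `π` w.r.t. `ext`. -/
def BrWExt (A : ABA σ Q) (M : Q → Q → Prop) (ext : List Q → Q) (π ψ : List Q) : Prop :=
  List.Forall₂ (αle A) π ψ ∧ M (ext π) (lastSt A ψ)

/-- `T ≼_ext U` : `U` strongly covers `T` w.r.t. `ext` (every branch of `U` strongly
covers some branch of `T`, and the root of `U` backward simulates the root of `T`). -/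
def TrExt (A : ABA σ Q) (F B : Q → Q → Prop) (ext : List Q → Q)
    (T U : Set (List Q)) : Prop :=
  (∀ ψ, IsBranch U ψ → ∃ π, IsBranch T π ∧ BrExt A F ext π ψ) ∧
  ∀ p r, [p] ∈ T → [r] ∈ U → B p r

/-- `T ≼_w-ext U` : `U` weakly covers `T` w.r.t. `ext`. -/
def TrWExt (A : ABA σ Q) (M B : Q → Q → Prop) (ext : List Q → Q)
    (T U : Set (List Q)) : Prop :=
  (∀ ψ, IsBranch U ψ → ∃ π, IsBranch T π ∧ BrWExt A M ext π ψ) ∧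
  ∀ p r, [p] ∈ T → [r] ∈ U → B p r

/-- `sw_T(V)` : the tree of all nonempty prefixes of the strict weakly covering branches
of `V` w.r.t. `T` and `ext` (branches of `V` strongly covering no branch of `T`). -/
def swT (A : ABA σ Q) (F : Q → Q → Prop) (ext : List Q → Q)
    (T V : Set (List Q)) : Set (List Q) :=
  {ρ | ρ ≠ [] ∧ ∃ ψ, IsBranch V ψ ∧ (¬ ∃ π, IsBranch T π ∧ BrExt A F ext π ψ) ∧ ρ <+: ψ}

/-!
Induction on the size of `T`, proving more generally that for every `y` with `root(T) ≼_F y`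
some `r` with `y ≼_B r` is the root of a covering run. If the root `p` is a leaf, a mediator of
`ext [p] ≼_M p ≼_F y` is a one-node covering run. Otherwise `p` takes a transition `p →a P`, which
the forward simulation copies to a transition `y →a D`; every target `e ∈ D` is `≼_F`-above some
child of `p`, so by induction some `z` with `e ≼_B z` roots a run covering that part of `T`. As long
as a target `e` of the current transition `c →a D` roots no covering run, the backward simulation
applied to `e ≼_B z` replaces it by `z`, giving `s →a {z} ∪ R` with `c ≼_B s` and every element of
`R` `≼_F`-above an element of `D \ {e}`; coverage is inherited along `≼_F`, since forward
simulation lifts partial runs. Choosing `e` with the largest `≼_F`-upset, the weight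
`∑ (|Q| + 1) ^ |upset|` over the uncovered targets strictly decreases: a new uncovered target is
either `≼_F`-equivalent to its source, and by unambiguity distinct such targets have distinct
sources, or it has a strictly smaller upset than `e`. When every target is covered, grafting the
runs below `c` gives the required run.
-/

theorem lastSt_cons (A : ABA σ Q) (c : Q) {l : List Q} (hl : l ≠ []) :
    lastSt A (c :: l) = lastSt A l := by
  obtain ⟨a, t, rfl⟩ := List.exists_cons_of_ne_nil hl
  simp only [lastSt, List.getLastD_cons]

theorem List.Forall₂.rel_lastSt (A : ABA σ Q) {R : Q → Q → Prop} {l₁ l₂ : List Q}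
    (h : List.Forall₂ R l₁ l₂) (hl : l₁ ≠ []) : R (lastSt A l₁) (lastSt A l₂) := by
  induction h with
  | nil => exact absurd rfl hl
  | @cons a b l₁ l₂ hab htail ih =>
    rcases eq_or_ne l₁ [] with rfl | hl₁
    · rw [List.forall₂_nil_left_iff.1 htail]
      exact hab
    · have hl₂ : l₂ ≠ [] := by rintro rfl; exact hl₁ (List.forall₂_nil_right_iff.1 htail)
      rw [lastSt_cons A a hl₁, lastSt_cons A b hl₂]
      exact ih hl₁

theorem List.Forall₂.trans {α : Type*} {R : α → α → Prop}
    (hR : ∀ a b c, R a b → R b c → R a c) {l₁ l₂ l₃ : List α}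
    (h₁₂ : List.Forall₂ R l₁ l₂) (h₂₃ : List.Forall₂ R l₂ l₃) : List.Forall₂ R l₁ l₃ := by
  induction h₁₂ generalizing l₃ with
  | nil => exact h₂₃
  | cons hab _ ih =>
    obtain ⟨c, l₃', hbc, h', rfl⟩ := List.forall₂_cons_left_iff.1 h₂₃
    exact .cons (hR _ _ _ hab hbc) (ih h')

theorem IsTree.ne_nil {T : Set (List Q)} (hT : IsTree T) {l : List Q} (hl : l ∈ T) :
    l ≠ [] := by
  rintro rfl
  exact hT.not_nil hl

theorem IsTree.head?_eq {T : Set (List Q)} (hT : IsTree T) {p : Q} (hp : [p] ∈ T)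
    {l : List Q} (hl : l ∈ T) : l.head? = some p := by
  obtain ⟨a, t, rfl⟩ := List.exists_cons_of_ne_nil (hT.ne_nil hl)
  have ha : [a] ∈ T := hT.prefix_closed _ hl [a] ⟨t, rfl⟩ (List.cons_ne_nil _ _)
  simp [hT.root.unique ha hp]

theorem isPartialRun_singleton (A : ABA σ Q) (w : ℕ → σ) (s : Q) :
    IsPartialRun A w {[s]} := by
  have hsuccs : succs {[s]} [s] = ∅ := by
    ext q
    simp [succs]
  refine ⟨⟨by simp, ?_, ⟨s, rfl, fun q hq => by simpa using hq⟩⟩, Set.finite_singleton _, ?_⟩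
  · rintro π rfl ρ hρ hne
    rcases List.prefix_cons_iff.1 hρ with rfl | ⟨t, rfl, ht⟩
    · exact absurd rfl hne
    · rw [List.prefix_nil.1 ht]
      rfl
  · rintro π rfl
    exact .inl hsuccs

theorem isBranch_singleton_iff {s : Q} {ψ : List Q} :
    IsBranch ({[s]} : Set (List Q)) ψ ↔ ψ = [s] := by
  refine ⟨fun h => h.1, ?_⟩
  rintro rfl
  refine ⟨rfl, ?_⟩
  ext q
  simp [succs]

def subtree (p x : Q) (T : Set (List Q)) : Set (List Q) :=
  {l | l.head? = some x ∧ p :: l ∈ T}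

theorem succs_subtree {T : Set (List Q)} {p x : Q} {l : List Q} (hl : l.head? = some x) :
    succs (subtree p x T) l = succs T (p :: l) := by
  ext q
  have hl' : (l ++ [q]).head? = some x := by simp [List.head?_append, hl]
  simp only [succs, subtree, Set.mem_ofPred_eq, hl', true_and, List.cons_append]

theorem IsBranch.of_subtree {T : Set (List Q)} {p x : Q} {l : List Q}
    (h : IsBranch (subtree p x T) l) : IsBranch T (p :: l) :=
  ⟨h.1.2, succs_subtree h.1.1 ▸ h.2⟩

theorem ncard_subtree_lt {T : Set (List Q)} (hT : T.Finite) {p : Q} (hp : [p] ∈ T) (x : Q) :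
    (subtree p x T).ncard < T.ncard := by
  have himage : List.cons p '' subtree p x T ⊂ T := by
    refine ⟨by rintro _ ⟨l, hl, rfl⟩; exact hl.2, fun hsub => ?_⟩
    obtain ⟨l, hl, hpl⟩ := hsub hp
    cases (List.cons_eq_cons.1 hpl).2
    exact absurd hl.1 (by simp)
  rw [← Set.ncard_image_of_injective _ List.cons_injective]
  exact Set.ncard_lt_ncard himage hT

theorem isPartialRun_subtree {A : ABA σ Q} {w : ℕ → σ} {T : Set (List Q)}
    (hT : IsPartialRun A w T) {p x : Q} (hx : x ∈ succs T [p]) :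
    IsPartialRun A (fun n => w (n + 1)) (subtree p x T) := by
  have hx' : [x] ∈ subtree p x T := ⟨rfl, hx⟩
  refine ⟨⟨fun h => by simp [subtree] at h, ?_, ⟨x, hx', fun q hq => by simpa using hq.1⟩⟩,
    ?_, ?_⟩
  · rintro π ⟨hπx, hπ⟩ ρ hρ hne
    refine ⟨?_, hT.tree.prefix_closed _ hπ _ (List.cons_prefix_cons.2 ⟨rfl, hρ⟩) (by simp)⟩
    obtain ⟨a, t, rfl⟩ := List.exists_cons_of_ne_nil hne
    obtain ⟨b, s, rfl⟩ := List.exists_cons_of_ne_nil (hρ.ne_nil hne)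
    rw [← hπx, (List.cons_prefix_cons.1 hρ).1]
    rfl
  · exact (hT.finite.preimage List.cons_injective.injOn).subset fun l hl => hl.2
  · rintro π ⟨hπx, hπ⟩
    rcases π with _ | ⟨a, t⟩
    · simp at hπx
    rw [succs_subtree hπx]
    simpa [lastSt_cons A p (List.cons_ne_nil a t)] using hT.step _ hπ

def graft (c : Q) (D : Set Q) (G : Q → Set (List Q)) : Set (List Q) :=
  insert [c] {ψ | ∃ e ∈ D, ∃ l ∈ G e, ψ = c :: l}

section Graft

variable {c : Q} {D : Set Q} {G : Q → Set (List Q)}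

theorem cons_mem_graft_iff (hG : ∀ e ∈ D, IsTree (G e) ∧ [e] ∈ G e) {e : Q} (he : e ∈ D)
    {l : List Q} (hl : l.head? = some e) : c :: l ∈ graft c D G ↔ l ∈ G e := by
  refine ⟨?_, fun h => .inr ⟨e, he, l, h, rfl⟩⟩
  rintro (h | ⟨e', he', l', hl', h⟩)
  · cases (List.cons_eq_cons.1 h).2
    simp at hl
  · cases (List.cons_eq_cons.1 h).2
    cases hl.symm.trans ((hG e' he').1.head?_eq (hG e' he').2 hl')
    exact hl'

theorem succs_graft_root (hG : ∀ e ∈ D, IsTree (G e) ∧ [e] ∈ G e) :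
    succs (graft c D G) [c] = D := by
  ext q
  refine ⟨?_, fun hq => .inr ⟨q, hq, [q], (hG q hq).2, rfl⟩⟩
  rintro (h | ⟨e, he, l, hl, h⟩)
  · simp at h
  · cases (List.cons_eq_cons.1 h).2
    cases (hG e he).1.head?_eq (hG e he).2 hl
    exact he

theorem succs_graft_cons (hG : ∀ e ∈ D, IsTree (G e) ∧ [e] ∈ G e) {e : Q} (he : e ∈ D)
    {l : List Q} (hl : l ∈ G e) : succs (graft c D G) (c :: l) = succs (G e) l := by
  ext q
  have hhead : (l ++ [q]).head? = some e := by
    rw [List.head?_append, (hG e he).1.head?_eq (hG e he).2 hl]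
    rfl
  exact cons_mem_graft_iff hG he hhead

theorem isTree_graft (hG : ∀ e ∈ D, IsTree (G e) ∧ [e] ∈ G e) : IsTree (graft c D G) := by
  refine ⟨?_, ?_, ⟨c, .inl rfl, ?_⟩⟩
  · rintro (h | ⟨e, -, l, -, h⟩) <;> simp at h
  · rintro π (rfl | ⟨e, he, l, hl, rfl⟩) ρ hρ hne
    all_goals obtain ⟨t, rfl, ht⟩ := (List.prefix_cons_iff.1 hρ).resolve_left hne
    · rw [List.prefix_nil.1 ht]
      exact .inl rfl
    · rcases eq_or_ne t [] with rfl | htne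
      · exact .inl rfl
      · exact .inr ⟨e, he, t, (hG e he).1.prefix_closed l hl t ht htne, rfl⟩
  · rintro q (h | ⟨e, -, l, -, h⟩) <;> exact (List.cons_eq_cons.1 h).1

theorem isPartialRun_graft [Finite Q] {A : ABA σ Q} {w : ℕ → σ} (hD : D ∈ A.δ c (w 0))
    (hG : ∀ e ∈ D, IsPartialRun A (fun n => w (n + 1)) (G e) ∧ [e] ∈ G e) :
    IsPartialRun A w (graft c D G) := by
  have hG' : ∀ e ∈ D, IsTree (G e) ∧ [e] ∈ G e := fun e he => ⟨(hG e he).1.tree, (hG e he).2⟩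
  refine ⟨isTree_graft hG', ?_, ?_⟩
  · refine .insert _ (((Set.toFinite D).biUnion fun e he =>
      (hG e he).1.finite.image (List.cons c)).subset ?_)
    rintro _ ⟨e, he, l, hl, rfl⟩
    exact Set.mem_biUnion he ⟨l, hl, rfl⟩
  · rintro π (rfl | ⟨e, he, l, hl, rfl⟩)
    · exact .inr (by rwa [succs_graft_root hG'])
    · rw [succs_graft_cons hG' he hl]
      rcases l with _ | ⟨a, t⟩
      · exact absurd hl (hG e he).1.tree.not_nil
      simpa [lastSt_cons A c (List.cons_ne_nil a t)] using (hG e he).1.step _ hl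

theorem IsBranch.of_graft (hG : ∀ e ∈ D, IsTree (G e) ∧ [e] ∈ G e) (hD : D ≠ ∅)
    {ψ : List Q} (hψ : IsBranch (graft c D G) ψ) :
    ∃ e ∈ D, ∃ l, ψ = c :: l ∧ IsBranch (G e) l := by
  obtain ⟨rfl | ⟨e, he, l, hl, rfl⟩, hleaf⟩ := hψ
  · exact absurd (succs_graft_root hG ▸ hleaf) hD
  · exact ⟨e, he, l, rfl, hl, succs_graft_cons hG he hl ▸ hleaf⟩

end Graft

section Simulation

variable {A : ABA σ Q} {F B M : Q → Q → Prop}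

theorem ForwardSim.exists_partialRun [Finite Q] (hF : ForwardSim A F) (hne : A.NoEmpty)
    {w : ℕ → σ} {G : Set (List Q)} {g y : Q} (hG : IsPartialRun A w G) (hg : [g] ∈ G)
    (hgy : F g y) :
    ∃ G', IsPartialRun A w G' ∧ [y] ∈ G' ∧
      ∀ ψ, IsBranch G' ψ → ∃ η, IsBranch G η ∧ List.Forall₂ F η ψ := by
  induction hn : G.ncard using Nat.strong_induction_on generalizing w G g y with
  | _ n ih =>
    rcases hG.step [g] hg with hleaf | hstep
    · refine ⟨{[y]}, isPartialRun_singleton A w y, rfl, fun ψ hψ => ?_⟩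
      rw [isBranch_singleton_iff.1 hψ]
      exact ⟨[g], ⟨hg, hleaf⟩, .cons hgy .nil⟩
    obtain ⟨R, hR, hRdom⟩ := (hF g y hgy).2 (w 0) _ hstep
    have : Nonempty Q := ⟨g⟩
    choose! x hx hxr using hRdom
    have hsub : ∀ r ∈ R, ∃ G', IsPartialRun A (fun n => w (n + 1)) G' ∧ [r] ∈ G' ∧
        ∀ ψ, IsBranch G' ψ → ∃ η, IsBranch (subtree g (x r) G) η ∧ List.Forall₂ F η ψ :=
      fun r hr => ih _ (hn ▸ ncard_subtree_lt hG.finite hg _) (isPartialRun_subtree hG (hx r hr))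
        ⟨rfl, hx r hr⟩ (hxr r hr) rfl
    choose! G' hG'run hG'root hG'cov using hsub
    refine ⟨graft y R G', isPartialRun_graft hR fun r hr => ⟨hG'run r hr, hG'root r hr⟩, .inl rfl,
      fun ψ hψ => ?_⟩
    obtain ⟨r, hr, l, rfl, hl⟩ := hψ.of_graft (fun r hr => ⟨(hG'run r hr).tree, hG'root r hr⟩)
      fun h => hne y (w 0) (h ▸ hR)
    obtain ⟨η, hη, hηl⟩ := hG'cov r hr l hl
    exact ⟨g :: η, hη.of_subtree, .cons hgy hηl⟩

theorem αle_of_forwardSim_of_backwardSim (hF : ForwardSim A F) (hB : BackwardSim A F B)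
    {p y r : Q} (hpy : F p y) (hyr : B y r) : αle A p r :=
  fun hp => (hB y r hyr).2.1 ((hF p y hpy).1 hp)

theorem BrExt.trans_forall₂ (hF : ForwardSim A F) (hFt : Transitive F) {ext : List Q → Q}
    {π ψ ψ' : List Q} (h : BrExt A F ext π ψ) (hψψ' : List.Forall₂ F ψ ψ') (hψ : ψ ≠ []) :
    BrExt A F ext π ψ' :=
  ⟨h.1.trans (fun _ _ _ hab hbc ha => hbc (hab ha)) (hψψ'.imp fun a b hab => (hF a b hab).1),
    hFt h.2 (hψψ'.rel_lastSt A hψ)⟩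

def Covers (A : ABA σ Q) (F : Q → Q → Prop) (ext : List Q → Q) (T U : Set (List Q)) : Prop :=
  ∀ ψ, IsBranch U ψ → ∃ π, IsBranch T π ∧ BrExt A F ext π ψ

def HasCoveringRun (A : ABA σ Q) (F : Q → Q → Prop) (w : ℕ → σ) (T : Set (List Q))
    (ext : List Q → Q) (r : Q) : Prop :=
  ∃ U, IsPartialRun A w U ∧ [r] ∈ U ∧ Covers A F ext T U

theorem HasCoveringRun.mono {w : ℕ → σ} {T T' : Set (List Q)} {ext : List Q → Q} {r : Q}
    (h : HasCoveringRun A F w T ext r) (hTT' : ∀ π, IsBranch T π → IsBranch T' π) :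
    HasCoveringRun A F w T' ext r := by
  obtain ⟨U, hU, hr, hcov⟩ := h
  refine ⟨U, hU, hr, fun ψ hψ => ?_⟩
  obtain ⟨π, hπ, hπψ⟩ := hcov ψ hψ
  exact ⟨π, hTT' π hπ, hπψ⟩

theorem HasCoveringRun.of_forwardSim [Finite Q] (hF : ForwardSim A F) (hFt : Transitive F)
    (hne : A.NoEmpty) {w : ℕ → σ} {T : Set (List Q)} {ext : List Q → Q} {a b : Q}
    (h : HasCoveringRun A F w T ext a) (hab : F a b) : HasCoveringRun A F w T ext b := by
  obtain ⟨U, hU, ha, hcov⟩ := h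
  obtain ⟨U', hU', hb, hU'U⟩ := hF.exists_partialRun hne hU ha hab
  refine ⟨U', hU', hb, fun ψ' hψ' => ?_⟩
  obtain ⟨ψ, hψ, hψψ'⟩ := hU'U ψ' hψ'
  obtain ⟨π, hπ, hπψ⟩ := hcov ψ hψ
  exact ⟨π, hπ, hπψ.trans_forall₂ hF hFt hψψ' (hU.tree.ne_nil hψ.1)⟩

theorem HasCoveringRun.of_children [Finite Q] (hne : A.NoEmpty) {w : ℕ → σ} {T : Set (List Q)}
    {ext : List Q → Q} {p c : Q} {D : Set Q} (hD : D ∈ A.δ c (w 0)) (hpc : αle A p c)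
    (hDcov : ∀ e ∈ D,
      HasCoveringRun A F (fun n => w (n + 1)) (List.cons p ⁻¹' T) (ext ∘ List.cons p) e) :
    HasCoveringRun A F w T ext c := by
  choose! G hGrun hGroot hGcov using hDcov
  refine ⟨graft c D G, isPartialRun_graft hD fun e he => ⟨hGrun e he, hGroot e he⟩, .inl rfl,
    fun ψ hψ => ?_⟩
  obtain ⟨e, he, l, rfl, hl⟩ := hψ.of_graft (fun e he => ⟨(hGrun e he).tree, hGroot e he⟩)
    fun h => hne c (w 0) (h ▸ hD)
  obtain ⟨τ, hτ, hτl⟩ := hGcov e he l hl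
  -- `IsBranch (List.cons p ⁻¹' T) τ` unfolds to `IsBranch T (p :: τ)`
  refine ⟨p :: τ, hτ, .cons hpc hτl.1, ?_⟩
  rw [lastSt_cons A c ((hGrun e he).tree.ne_nil hl.1)]
  exact hτl.2

theorem IsExtFun.restrict_subtree {T : Set (List Q)} {ext : List Q → Q} (hext : IsExtFun A M T ext)
    (p x : Q) : IsExtFun A M (subtree p x T) (ext ∘ List.cons p) := by
  intro l hl
  have hl' : l ≠ [] := by rintro rfl; exact absurd hl.1.1 (by simp)
  simpa [lastSt_cons A p hl'] using hext _ hl.of_subtree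

theorem exists_hasCoveringRun_of_isBranch_root (hF : ForwardSim A F) (hB : BackwardSim A F B)
    (hM : IsMediated F B M) {w : ℕ → σ} {T : Set (List Q)} {ext : List Q → Q} {p y : Q}
    (hext : IsExtFun A M T ext) (hp : IsBranch T [p]) (hpy : F p y) :
    ∃ r, B y r ∧ HasCoveringRun A F w T ext r := by
  obtain ⟨s, hFs, hBs⟩ := hM.mediator _ _ (hM.fwd_ext _ _ _ (hext [p] hp) hpy)
  refine ⟨s, hBs, {[s]}, isPartialRun_singleton A w s, rfl, fun ψ hψ => ?_⟩
  rw [isBranch_singleton_iff.1 hψ]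
  exact ⟨[p], hp, .cons (αle_of_forwardSim_of_backwardSim hF hB hpy hBs) .nil, hFs⟩

end Simulation

section Weight

open Finset

theorem sum_pow_lt_sum_pow_of_dominated {ι : Type*} [DecidableEq ι] {S D : Finset ι}
    {u : ι → ℕ} {g : ι → ι} {e₀ : ι} {W : ℕ} (hW : #S < W) (he₀ : e₀ ∈ D)
    (hmax : ∀ x ∈ D, u x ≤ u e₀) (hg : ∀ e ∈ S, g e ∈ D.erase e₀ ∧ u e ≤ u (g e))
    (hinj : Set.InjOn g {e | e ∈ S ∧ u e = u (g e)}) :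
    ∑ e ∈ S, W ^ u e < ∑ x ∈ D, W ^ u x := by
  have hW0 : 0 < W := Nat.zero_lt_of_lt hW
  have hkept : ∑ e ∈ S with u e = u (g e), W ^ u e ≤ ∑ x ∈ D.erase e₀, W ^ u x :=
    calc ∑ e ∈ S with u e = u (g e), W ^ u e
        = ∑ e ∈ S with u e = u (g e), W ^ u (g e) :=
          sum_congr rfl fun e he => by rw [(mem_filter.1 he).2]
      _ = ∑ x ∈ (S.filter fun e => u e = u (g e)).image g, W ^ u x :=
          (sum_image (f := fun x => W ^ u x) fun _ he₁ _ he₂ =>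
            hinj (mem_filter.1 he₁) (mem_filter.1 he₂)).symm
      _ ≤ ∑ x ∈ D.erase e₀, W ^ u x := by
          refine sum_le_sum_of_subset fun x hx => ?_
          obtain ⟨e, he, rfl⟩ := mem_image.1 hx
          exact (hg e (mem_filter.1 he).1).1
  have hdropped : ∑ e ∈ S with u e ≠ u (g e), W ^ u e < W ^ u e₀ := by
    have hbound : W * ∑ e ∈ S with u e ≠ u (g e), W ^ u e ≤ #S * W ^ u e₀ :=
      calc W * ∑ e ∈ S with u e ≠ u (g e), W ^ u e
          ≤ ∑ e ∈ S with u e ≠ u (g e), W ^ u e₀ := by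
            rw [mul_sum]
            refine sum_le_sum fun e he => ?_
            obtain ⟨heS, hne⟩ := mem_filter.1 he
            have hlt : u e < u e₀ := ((hg e heS).2.lt_of_ne hne).trans_le
              (hmax _ (mem_of_mem_erase (hg e heS).1))
            rw [← pow_succ']
            exact Nat.pow_le_pow_right hW0 hlt
        _ ≤ #S * W ^ u e₀ := by
            rw [sum_const, smul_eq_mul]
            exact Nat.mul_le_mul_right _ (card_filter_le _ _)
    exact Nat.lt_of_mul_lt_mul_left
      (hbound.trans_lt (Nat.mul_lt_mul_of_pos_right hW (by positivity)))
  calc ∑ e ∈ S, W ^ u e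
      = ∑ e ∈ S with u e = u (g e), W ^ u e + ∑ e ∈ S with u e ≠ u (g e), W ^ u e :=
        (sum_filter_add_sum_filter_not _ _ _).symm
    _ < ∑ x ∈ D.erase e₀, W ^ u x + W ^ u e₀ := add_lt_add_of_le_of_lt hkept hdropped
    _ = ∑ x ∈ D, W ^ u x := sum_erase_add _ _ he₀

variable [Fintype Q] {F : Q → Q → Prop}

open Classical in
noncomputable def upsetCard (F : Q → Q → Prop) (e : Q) : ℕ :=
  #{b | F e b}

theorem upsetCard_le_of_rel (hFt : Transitive F) {a b : Q} (h : F a b) :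
    upsetCard F b ≤ upsetCard F a := by
  classical
  exact card_le_card fun x hx => by simpa using hFt h (by simpa using hx)

theorem rel_of_upsetCard_eq (hFr : Reflexive F) (hFt : Transitive F) {a b : Q} (h : F a b)
    (heq : upsetCard F b = upsetCard F a) : F b a := by
  classical
  have hsub : univ.filter (fun x => F b x) ⊆ univ.filter (fun x => F a x) :=
    fun x hx => by simpa using hFt h (by simpa using hx)
  have ha : a ∈ univ.filter (fun x => F b x) := by
    rw [eq_of_subset_of_card_le hsub (by simp only [upsetCard] at heq; omega)]
    simpa using hFr a
  simpa using ha

open Classical in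
noncomputable def upsetWeight (F : Q → Q → Prop) (S : Set Q) : ℕ :=
  ∑ e ∈ S.toFinset, (Fintype.card Q + 1) ^ upsetCard F e

theorem upsetWeight_lt (hFr : Reflexive F) (hFt : Transitive F) {S S' : Set Q} {e₀ : Q}
    (he₀ : e₀ ∈ S) (hmax : ∀ e ∈ S, upsetCard F e ≤ upsetCard F e₀)
    (hdom : ∀ e ∈ S', ∃ x ∈ S, x ≠ e₀ ∧ F x e)
    (hS' : ∀ e₁ ∈ S', ∀ e₂ ∈ S', F e₁ e₂ → F e₂ e₁ → e₁ = e₂) :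
    upsetWeight F S' < upsetWeight F S := by
  classical
  have : Nonempty Q := ⟨e₀⟩
  choose! g hgS hgne hgF using hdom
  refine sum_pow_lt_sum_pow_of_dominated (g := g) (Nat.lt_succ_of_le (card_le_univ _))
    (Set.mem_toFinset.2 he₀) (fun x hx => hmax x (Set.mem_toFinset.1 hx)) (fun e he => ?_) ?_
  · rw [Set.mem_toFinset] at he
    exact ⟨mem_erase.2 ⟨hgne e he, Set.mem_toFinset.2 (hgS e he)⟩,
      upsetCard_le_of_rel hFt (hgF e he)⟩
  · rintro e₁ ⟨he₁, hu₁⟩ e₂ ⟨he₂, hu₂⟩ hg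
    rw [Set.mem_toFinset] at he₁ he₂
    have h₁ := rel_of_upsetCard_eq hFr hFt (hgF e₁ he₁) hu₁
    have h₂ := rel_of_upsetCard_eq hFr hFt (hgF e₂ he₂) hu₂
    exact hS' e₁ he₁ e₂ he₂ (hFt h₁ (hg ▸ hgF e₂ he₂)) (hFt h₂ (hg ▸ hgF e₁ he₁))

end Weight

section Repair

variable [Fintype Q] {A : ABA σ Q} {F B : Q → Q → Prop} {a : σ} {Good : Q → Prop} {P : Set Q}

theorem exists_repair_step (hFr : Reflexive F) (hFt : Transitive F)
    (hunamb : Unambiguous A F) (hB : BackwardSim A F B)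
    (hhandle : ∀ e, (∃ x ∈ P, F x e) → ∃ z, B e z ∧ Good z)
    (hlift : ∀ x e, Good x → F x e → Good e) {c : Q} {D : Set Q} (hD : D ∈ A.δ c a)
    (hinv : ∀ e ∈ D, Good e ∨ ∃ x ∈ P, F x e) {e₀ : Q} (he₀ : e₀ ∈ {e ∈ D | ¬ Good e})
    (hmax : ∀ e ∈ {e ∈ D | ¬ Good e}, upsetCard F e ≤ upsetCard F e₀) :
    ∃ s D', B c s ∧ D' ∈ A.δ s a ∧ (∀ e ∈ D', Good e ∨ ∃ x ∈ P, F x e) ∧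
      upsetWeight F {e ∈ D' | ¬ Good e} < upsetWeight F {e ∈ D | ¬ Good e} := by
  obtain ⟨he₀D, he₀bad⟩ := he₀
  obtain ⟨z, he₀z, hz⟩ := hhandle e₀ ((hinv e₀ he₀D).resolve_left he₀bad)
  obtain ⟨s, R, -, hR, hcs, hRdom⟩ := (hB e₀ z he₀z).2.2 a c (D \ {e₀}) (by simp)
    (by rwa [Set.insert_sdiff_singleton, Set.insert_eq_of_mem he₀D])
  refine ⟨s, insert z R, hcs, hR, ?_, upsetWeight_lt hFr hFt ⟨he₀D, he₀bad⟩ hmax ?_ ?_⟩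
  · rintro e (rfl | he)
    · exact .inl hz
    obtain ⟨x, ⟨hxD, -⟩, hxe⟩ := hRdom e he
    exact (hinv x hxD).imp (hlift x e · hxe) fun ⟨x', hx', hx'x⟩ => ⟨x', hx', hFt hx'x hxe⟩
  · rintro e ⟨rfl | he, hebad⟩
    · exact absurd hz hebad
    obtain ⟨x, ⟨hxD, hxe₀⟩, hxe⟩ := hRdom e he
    exact ⟨x, ⟨hxD, fun hx => hebad (hlift x e hx hxe)⟩, hxe₀, hxe⟩
  · intro e₁ he₁ e₂ he₂ h₁₂ h₂₁
    by_contra hne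
    exact hunamb s a _ hR e₁ he₁.1 e₂ he₂.1 hne ⟨h₁₂, h₂₁⟩

theorem exists_transition_forall_good (hFr : Reflexive F) (hFt : Transitive F)
    (hunamb : Unambiguous A F) (hBr : Reflexive B) (hBt : Transitive B)
    (hB : BackwardSim A F B) (hhandle : ∀ e, (∃ x ∈ P, F x e) → ∃ z, B e z ∧ Good z)
    (hlift : ∀ x e, Good x → F x e → Good e) {c : Q} {D : Set Q} (hD : D ∈ A.δ c a)
    (hinv : ∀ e ∈ D, Good e ∨ ∃ x ∈ P, F x e) :
    ∃ c' D', B c c' ∧ D' ∈ A.δ c' a ∧ ∀ e ∈ D', Good e := by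
  induction hn : upsetWeight F {e ∈ D | ¬ Good e} using Nat.strong_induction_on
    generalizing c D with
  | _ n ih =>
    by_cases hgood : ∀ e ∈ D, Good e
    · exact ⟨c, D, hBr c, hD, hgood⟩
    push Not at hgood
    obtain ⟨e₀, he₀, hmax⟩ :=
      Set.exists_max_image {e ∈ D | ¬ Good e} (upsetCard F) (Set.toFinite _) hgood
    obtain ⟨s, D', hcs, hD', hinv', hlt⟩ :=
      exists_repair_step hFr hFt hunamb hB hhandle hlift hD hinv he₀ hmax
    obtain ⟨c', D'', hsc', hD'', hgood''⟩ := ih _ (hn ▸ hlt) hD' hinv' rfl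
    exact ⟨c', D'', hBt hcs hsc', hD'', hgood''⟩

end Repair

theorem exists_backwardSim_hasCoveringRun [Finite Q] {A : ABA σ Q} (hne : A.NoEmpty)
    {F B M : Q → Q → Prop} (hFr : Reflexive F) (hFt : Transitive F) (hF : ForwardSim A F)
    (hunamb : Unambiguous A F) (hBr : Reflexive B) (hBt : Transitive B)
    (hB : BackwardSim A F B) (hM : IsMediated F B M) {w : ℕ → σ} {T : Set (List Q)}
    {ext : List Q → Q} {p y : Q} (hT : IsPartialRun A w T) (hp : [p] ∈ T)
    (hext : IsExtFun A M T ext) (hpy : F p y) :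
    ∃ r, B y r ∧ HasCoveringRun A F w T ext r := by
  have := Fintype.ofFinite Q
  induction hn : T.ncard using Nat.strong_induction_on generalizing w T p ext y with
  | _ n ih =>
    rcases hT.step [p] hp with hleaf | hstep
    · exact exists_hasCoveringRun_of_isBranch_root hF hB hM hext ⟨hp, hleaf⟩ hpy
    have hhandle : ∀ e, (∃ x ∈ succs T [p], F x e) → ∃ z, B e z ∧
        HasCoveringRun A F (fun n => w (n + 1)) (List.cons p ⁻¹' T) (ext ∘ List.cons p) z := by
      rintro e ⟨x, hx, hxe⟩
      obtain ⟨z, hez, hz⟩ := ih _ (hn ▸ ncard_subtree_lt hT.finite hp x)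
        (isPartialRun_subtree hT hx) ⟨rfl, hx⟩ (hext.restrict_subtree p x) hxe rfl
      exact ⟨z, hez, hz.mono fun _ h => h.of_subtree⟩
    obtain ⟨R, hR, hRdom⟩ := (hF p y hpy).2 (w 0) _ hstep
    obtain ⟨c, D, hyc, hD, hDcov⟩ := exists_transition_forall_good hFr hFt hunamb hBr hBt hB
      hhandle (fun _ _ hx hxe => hx.of_forwardSim hF hFt hne hxe) hR fun e he => .inr (hRdom e he)
    exact ⟨c, hyc, .of_children hne hD (αle_of_forwardSim_of_backwardSim hF hB hpy hyc) hDcov⟩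

theorem stmt_13_general [Finite Q] (A : ABA σ Q) (hne : A.NoEmpty)
    (F B M : Q → Q → Prop)
    (hFr : Reflexive F) (hFt : Transitive F) (hF : ForwardSim A F)
    (hunamb : Unambiguous A F)
    (hBr : Reflexive B) (hBt : Transitive B) (hB : BackwardSim A F B)
    (hM : IsMediated F B M)
    (w : ℕ → σ) (T : Set (List Q)) (hT : IsPartialRun A w T)
    (ext : List Q → Q) (hext : IsExtFun A M T ext) :
    ∃ U : Set (List Q), IsPartialRun A w U ∧ TrExt A F B ext T U := by
  obtain ⟨p, hp, -⟩ := hT.tree.root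
  obtain ⟨r, hpr, U, hU, hr, hcov⟩ := exists_backwardSim_hasCoveringRun hne hFr hFt hF hunamb
    hBr hBt hB hM hT hp hext (hFr p)
  refine ⟨U, hU, hcov, fun p' r' hp' hr' => ?_⟩
  rwa [hT.tree.root.unique hp' hp, hU.tree.root.unique hr' hr]

/-- For every partial run `T` of `A` on `w` with an extension function `ext`, there is a
partial run `U` of `A` on `w` that strongly covers `T` w.r.t. `ext`:
`root(T) ≼_B root(U)` and every branch `ψ` of `U` satisfies `π ≼_α ψ` and
`ext(π) ≼_F leaf(ψ)` for some branch `π` of `T`. -/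
theorem stmt_13 [Finite σ] [Finite Q] (A : ABA σ Q) (hne : A.NoEmpty)
    (F B M : Q → Q → Prop)
    (hFr : Reflexive F) (hFt : Transitive F) (hF : ForwardSim A F)
    (hunamb : Unambiguous A F)
    (hBr : Reflexive B) (hBt : Transitive B) (hB : BackwardSim A F B)
    (hM : IsMediated F B M)
    (w : ℕ → σ) (T : Set (List Q)) (hT : IsPartialRun A w T)
    (ext : List Q → Q) (hext : IsExtFun A M T ext) :
    ∃ U : Set (List Q), IsPartialRun A w U ∧ TrExt A F B ext T U :=
  stmt_13_general A hne F B M hFr hFt hF hunamb hBr hBt hB hM w T hT ext hext
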